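/- Let f = x(x³ + y³ + z³) ∈ ℂ[x,y,z] (degree N = 4). Then the dimensions of the graded pieces of the Milnor algebra are: dim M(f)_0 = 1, dim M(f)_1 = 3, dim M(f)_2 = 6, dim M(f)_3 = 7, dim M(f)_4 = 6, dim M(f)_5 = 4, and dim M(f)_k = 3 for all k ≥ 6. In particular ct(C) = 4 and st(C) = 6. -/

import Mathlib

open MvPolynomial

noncomputable def milnorDim (f : MvPolynomial (Fin 3) ℂ) (k : ℕ) : ℕ :=
  Module.finrank ℂ
    (↥(homogeneousSubmodule (Fin 3) ℂ k) ⧸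
      (Submodule.comap (homogeneousSubmodule (Fin 3) ℂ k).subtype
        ((Ideal.span {pderiv (0 : Fin 3) f, pderiv 1 f, pderiv 2 f}).restrictScalars ℂ)))


/-- `dim M(f_s)_k` for a smooth curve `f_s = 0` of degree `N`: the coefficient of `t^k`
in `((1 − t^{N−1})/(1 − t))³`. -/
noncomputable def smoothMilnorDim (N k : ℕ) : ℕ :=
  ((∑ i ∈ Finset.range (N - 1), (Polynomial.X : Polynomial ℕ) ^ i) ^ 3).coeff k

/-!
Modulo the Jacobian ideal `J = (4x³ + y³ + z³, xy², xz²)` one has `xy² = xz² = x⁴ = 0`,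
`x³ = -(y³ + z³)/4`, and hence `y²(y³ + z³) = z²(y³ + z³) = 0`. Rewriting with these relations
shows that in every degree the quotient is spanned by the "standard" monomials `x^a y^b z^c` with
`1 ≤ a ≤ 2, b, c ≤ 1`, or `a = 0` and `b ≤ 2` or `b ≤ 4, c ≤ 1`; there are 1, 3, 6, 7, 6, 4 of
them in degrees `0, …, 5` and 3 (namely `y^b z^(k-b)`, `b ≤ 2`) in each degree `k ≥ 6`. They are
independent: in degrees `≤ 5` explicit coefficient functionals vanishing on `J` are dual to them,
and in degree `k ≥ 6` evaluation at the three singular points `(0 : w : 1)`, `w³ = -1`, of `C`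
gives a nonsingular Vandermonde matrix.
-/

open Submodule Module

theorem finrank_quotient_comap_subtype_eq {K V ι : Type*} [Field K] [AddCommGroup V]
    [Module K V] [Fintype ι] [DecidableEq ι] {H N : Submodule K V} {b : ι → V}
    (hb : ∀ i, b i ∈ H) (hspan : H ≤ N ⊔ span K (Set.range b)) {L : ι → V →ₗ[K] K}
    (hL : ∀ i, N ≤ LinearMap.ker (L i)) (hdet : (Matrix.of fun i j => L i (b j)).det ≠ 0) :
    finrank K (H ⧸ N.comap H.subtype) = Fintype.card ι := by
  let q := (N.comap H.subtype).mkQ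
  let v : ι → H ⧸ N.comap H.subtype := fun i => q ⟨b i, hb i⟩
  have hv (c : ι → K) : ∑ i, c i • v i = q (∑ i, c i • ⟨b i, hb i⟩) := by
    simp only [v, map_sum, map_smul]
  have hcoe (c : ι → K) : ((∑ i, c i • (⟨b i, hb i⟩ : H) : H) : V) = ∑ i, c i • b i := by
    simp
  have hli : LinearIndependent K v := by
    rw [Fintype.linearIndependent_iff]
    intro c hc
    rw [hv, mkQ_apply, Quotient.mk_eq_zero, mem_comap, subtype_apply, hcoe] at hc
    refine congrFun (Matrix.eq_zero_of_mulVec_eq_zero hdet (funext fun i => ?_))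
    simpa [Matrix.mulVec, dotProduct, mul_comm] using hL i hc
  have hsp : ⊤ ≤ span K (Set.range v) := by
    intro x _
    obtain ⟨⟨p, hp⟩, rfl⟩ := (N.comap H.subtype).mkQ_surjective x
    obtain ⟨n, hn, w, hw, rfl⟩ := mem_sup.1 (hspan hp)
    obtain ⟨c, rfl⟩ := (mem_span_range_iff_exists_fun K).1 hw
    have : q ⟨n + ∑ i, c i • b i, hp⟩ = ∑ i, c i • v i := by
      rw [hv, ← sub_eq_zero, ← map_sub, mkQ_apply, Quotient.mk_eq_zero, mem_comap]
      simpa [hcoe] using hn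
    exact this ▸ sum_mem fun i _ => smul_mem _ _ (subset_span ⟨i, rfl⟩)
  rw [finrank_eq_card_basis (Basis.mk hli hsp)]

noncomputable section

namespace LineCubic

abbrev S := MvPolynomial (Fin 3) ℂ

def mono (a b c : ℕ) : S := X 0 ^ a * X 1 ^ b * X 2 ^ c

def exps (a b c : ℕ) : Fin 3 →₀ ℕ := Finsupp.single 0 a + Finsupp.single 1 b + Finsupp.single 2 c

lemma mono_eq_monomial (a b c : ℕ) : mono a b c = monomial (exps a b c) 1 := by
  simp [mono, exps, X_pow_eq_monomial, monomial_mul]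

lemma exps_eq_iff {a b c a' b' c' : ℕ} :
    exps a b c = exps a' b' c' ↔ a = a' ∧ b = b' ∧ c = c' := by
  refine ⟨fun h => ?_, by rintro ⟨rfl, rfl, rfl⟩; rfl⟩
  have := DFunLike.congr_fun h
  exact ⟨by simpa [exps] using this 0, by simpa [exps] using this 1, by simpa [exps] using this 2⟩

lemma exps_le_iff {a b c a' b' c' : ℕ} :
    exps a b c ≤ exps a' b' c' ↔ a ≤ a' ∧ b ≤ b' ∧ c ≤ c' := by
  refine ⟨fun h => ⟨by simpa [exps] using h 0, by simpa [exps] using h 1,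
    by simpa [exps] using h 2⟩, fun ⟨h0, h1, h2⟩ i => ?_⟩
  fin_cases i <;> simpa [exps]

lemma exps_sub (a b c a' b' c' : ℕ) :
    exps a b c - exps a' b' c' = exps (a - a') (b - b') (c - c') := by
  ext i; fin_cases i <;> simp [exps]

lemma monomial_eq_smul_mono (m : Fin 3 →₀ ℕ) (r : ℂ) :
    monomial m r = r • mono (m 0) (m 1) (m 2) := by
  rw [monomial_eq, Finsupp.prod_fintype _ _ (fun _ => pow_zero _), Fin.prod_univ_three,
    smul_eq_C_mul, mono]

lemma mono_mem_homogeneousSubmodule (a b c : ℕ) :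
    mono a b c ∈ homogeneousSubmodule (Fin 3) ℂ (a + b + c) := by
  rw [mono_eq_monomial, mem_homogeneousSubmodule]
  exact isHomogeneous_monomial _ (by simp [Finsupp.degree_eq_sum, Fin.sum_univ_three, exps])

abbrev lineCubic : S := X 0 * (X 0 ^ 3 + X 1 ^ 3 + X 2 ^ 3)

def jac : Ideal S :=
  Ideal.span {4 * X 0 ^ 3 + X 1 ^ 3 + X 2 ^ 3, 3 * (X 0 * X 1 ^ 2), 3 * (X 0 * X 2 ^ 2)}

lemma span_pderiv_lineCubic :
    Ideal.span {pderiv 0 lineCubic, pderiv 1 lineCubic, pderiv 2 lineCubic} = jac := by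
  have h0 : pderiv 0 lineCubic = 4 * X 0 ^ 3 + X 1 ^ 3 + X 2 ^ 3 := by simp [pderiv_X]; ring
  have h1 : pderiv 1 lineCubic = 3 * (X 0 * X 1 ^ 2) := by simp [pderiv_X]; ring
  have h2 : pderiv 2 lineCubic = 3 * (X 0 * X 2 ^ 2) := by simp [pderiv_X]; ring
  rw [h0, h1, h2, jac]

lemma isUnit_ofNat (n : ℕ) [n.AtLeastTwo] : IsUnit (OfNat.ofNat n : S) := by
  rw [← map_ofNat C n]
  exact (isUnit_iff_ne_zero.2 (by norm_num)).map C

lemma cubic_gen_mem : 4 * X 0 ^ 3 + X 1 ^ 3 + X 2 ^ 3 ∈ jac := Ideal.subset_span (by simp)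

lemma x_mul_y_sq_mem : X 0 * X 1 ^ 2 ∈ jac :=
  (Ideal.unit_mul_mem_iff_mem _ (isUnit_ofNat 3)).1 (Ideal.subset_span (by simp))

lemma x_mul_z_sq_mem : X 0 * X 2 ^ 2 ∈ jac :=
  (Ideal.unit_mul_mem_iff_mem _ (isUnit_ofNat 3)).1 (Ideal.subset_span (by simp))

lemma x_pow_four_mem : X 0 ^ 4 ∈ jac := by
  refine (Ideal.unit_mul_mem_iff_mem _ (isUnit_ofNat 4)).1 ?_
  have : (4 : S) * X 0 ^ 4 = X 0 * (4 * X 0 ^ 3 + X 1 ^ 3 + X 2 ^ 3)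
      - X 1 * (X 0 * X 1 ^ 2) - X 2 * (X 0 * X 2 ^ 2) := by ring
  rw [this]
  exact jac.sub_mem (jac.sub_mem (jac.mul_mem_left _ cubic_gen_mem)
    (jac.mul_mem_left _ x_mul_y_sq_mem)) (jac.mul_mem_left _ x_mul_z_sq_mem)

lemma y_sq_mul_mem : (X 1 ^ 2 * (X 1 ^ 3 + X 2 ^ 3) : S) ∈ jac := by
  have : (X 1 ^ 2 * (X 1 ^ 3 + X 2 ^ 3) : S) =
      X 1 ^ 2 * (4 * X 0 ^ 3 + X 1 ^ 3 + X 2 ^ 3) - 4 * X 0 ^ 2 * (X 0 * X 1 ^ 2) := by ring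
  rw [this]
  exact jac.sub_mem (jac.mul_mem_left _ cubic_gen_mem) (jac.mul_mem_left _ x_mul_y_sq_mem)

lemma z_sq_mul_mem : (X 2 ^ 2 * (X 1 ^ 3 + X 2 ^ 3) : S) ∈ jac := by
  have : (X 2 ^ 2 * (X 1 ^ 3 + X 2 ^ 3) : S) =
      X 2 ^ 2 * (4 * X 0 ^ 3 + X 1 ^ 3 + X 2 ^ 3) - 4 * X 0 ^ 2 * (X 0 * X 2 ^ 2) := by ring
  rw [this]
  exact jac.sub_mem (jac.mul_mem_left _ cubic_gen_mem) (jac.mul_mem_left _ x_mul_z_sq_mem)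

lemma mono_mem_jac {a b c : ℕ} (h : 4 ≤ a ∨ 1 ≤ a ∧ 2 ≤ b ∨ 1 ≤ a ∧ 2 ≤ c) :
    mono a b c ∈ jac := by
  rcases h with ha | ⟨ha, hb⟩ | ⟨ha, hc⟩
  · obtain ⟨a, rfl⟩ := Nat.exists_eq_add_of_le' ha
    rw [show mono (a + 4) b c = mono a b c * X 0 ^ 4 by simp only [mono]; ring]
    exact jac.mul_mem_left _ x_pow_four_mem
  · obtain ⟨a, rfl⟩ := Nat.exists_eq_add_of_le' ha
    obtain ⟨b, rfl⟩ := Nat.exists_eq_add_of_le' hb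
    rw [show mono (a + 1) (b + 2) c = mono a b c * (X 0 * X 1 ^ 2) by simp only [mono]; ring]
    exact jac.mul_mem_left _ x_mul_y_sq_mem
  · obtain ⟨a, rfl⟩ := Nat.exists_eq_add_of_le' ha
    obtain ⟨c, rfl⟩ := Nat.exists_eq_add_of_le' hc
    rw [show mono (a + 1) b (c + 2) = mono a b c * (X 0 * X 2 ^ 2) by simp only [mono]; ring]
    exact jac.mul_mem_left _ x_mul_z_sq_mem

/-- The exponents of the monomials that are irreducible for the relations `xy² = xz² = x⁴ = 0`,
`x³ = -(y³ + z³)/4`, `y⁵ = -y²z³`, `y³z² = -z⁵` holding modulo `jac`. -/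
def IsStandard (a b c : ℕ) : Prop := 1 ≤ a ∧ a ≤ 2 ∧ b ≤ 1 ∧ c ≤ 1 ∨ a = 0 ∧ (b ≤ 2 ∨ b ≤ 4 ∧ c ≤ 1)

instance (a b c : ℕ) : Decidable (IsStandard a b c) := inferInstanceAs (Decidable (_ ∨ _))

def standardSpan (k : ℕ) : Submodule ℂ S :=
  span ℂ {p | ∃ a b c, a + b + c = k ∧ IsStandard a b c ∧ mono a b c = p}

lemma mono_mem_standardSpan {a b c : ℕ} (h : IsStandard a b c) :
    mono a b c ∈ standardSpan (a + b + c) :=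
  subset_span ⟨a, b, c, rfl, h, rfl⟩

lemma mono_zero_mem_sup_standardSpan (b c : ℕ) :
    mono 0 b c ∈ jac.restrictScalars ℂ ⊔ standardSpan (b + c) := by
  induction b using Nat.strong_induction_on generalizing c with
  | _ b ih =>
    by_cases hs : IsStandard 0 b c
    · simpa using mem_sup_right (mono_mem_standardSpan hs)
    simp only [IsStandard, not_or, not_and, not_le, true_implies] at hs
    by_cases hb : 5 ≤ b
    · obtain ⟨b, rfl⟩ := Nat.exists_eq_add_of_le' hb
      have e : mono 0 (b + 5) c = mono 0 b c * (X 1 ^ 2 * (X 1 ^ 3 + X 2 ^ 3))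
          - mono 0 (b + 2) (c + 3) := by simp only [mono]; ring
      rw [e]
      refine sub_mem (mem_sup_left (jac.mul_mem_left _ y_sq_mul_mem)) ?_
      simpa only [show b + 2 + (c + 3) = b + 5 + c by omega] using ih (b + 2) (by omega) (c + 3)
    · obtain ⟨b, rfl⟩ : ∃ b', b = b' + 3 := ⟨b - 3, by omega⟩
      obtain ⟨c, rfl⟩ : ∃ c', c = c' + 2 := ⟨c - 2, by omega⟩
      have e : mono 0 (b + 3) (c + 2) = mono 0 b c * (X 2 ^ 2 * (X 1 ^ 3 + X 2 ^ 3))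
          - mono 0 b (c + 5) := by simp only [mono]; ring
      rw [e]
      refine sub_mem (mem_sup_left (jac.mul_mem_left _ z_sq_mul_mem)) ?_
      simpa only [show b + (c + 5) = b + 3 + (c + 2) by omega] using ih b (by omega) (c + 5)

lemma mono_mem_sup_standardSpan (a b c : ℕ) :
    mono a b c ∈ jac.restrictScalars ℂ ⊔ standardSpan (a + b + c) := by
  by_cases hs : IsStandard a b c
  · exact mem_sup_right (mono_mem_standardSpan hs)
  obtain rfl | ha := Nat.eq_zero_or_pos a
  · simpa using mono_zero_mem_sup_standardSpan b c
  simp only [IsStandard, not_or, not_and, not_le] at hs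
  by_cases h3 : a = 3 ∧ b ≤ 1 ∧ c ≤ 1
  · obtain ⟨rfl, -, -⟩ := h3
    have e : (4 : ℂ) • mono 3 b c = mono 0 b c * (4 * X 0 ^ 3 + X 1 ^ 3 + X 2 ^ 3)
        - mono 0 (b + 3) c - mono 0 b (c + 3) := by
      rw [smul_eq_C_mul, map_ofNat]; simp only [mono]; ring
    refine (smul_mem_iff _ (by norm_num : (4 : ℂ) ≠ 0)).1 (e ▸ sub_mem (sub_mem
      (mem_sup_left (jac.mul_mem_left _ cubic_gen_mem)) ?_) ?_)
    · simpa only [show b + 3 + c = 3 + b + c by omega] using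
        mono_zero_mem_sup_standardSpan (b + 3) c
    · simpa only [show b + (c + 3) = 3 + b + c by omega] using
        mono_zero_mem_sup_standardSpan b (c + 3)
  · exact mem_sup_left (mono_mem_jac (by omega))

lemma homogeneousSubmodule_le_sup_standardSpan (k : ℕ) :
    homogeneousSubmodule (Fin 3) ℂ k ≤ jac.restrictScalars ℂ ⊔ standardSpan k := by
  intro p hp
  rw [← p.support_sum_monomial_coeff]
  refine sum_mem fun m hm => ?_
  have hk : m 0 + m 1 + m 2 = k := by
    rw [← (mem_homogeneousSubmodule _ _).1 hp (mem_support_iff.1 hm)]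
    simp [Finsupp.weight_apply, Finsupp.sum_fintype, Fin.sum_univ_three]
  rw [monomial_eq_smul_mono]
  exact smul_mem _ _ (hk ▸ mono_mem_sup_standardSpan _ _ _)

lemma standardSpan_le_span_mono {k r : ℕ} (t : Fin r → ℕ × ℕ × ℕ)
    (ht : ∀ a ≤ k, ∀ b ≤ k - a, IsStandard a b (k - a - b) → ∃ i, t i = (a, b, k - a - b)) :
    standardSpan k ≤ span ℂ (Set.range fun i => mono (t i).1 (t i).2.1 (t i).2.2) := by
  refine span_le.2 ?_
  rintro _ ⟨a, b, c, rfl, hs, rfl⟩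
  have hc : a + b + c - a - b = c := by omega
  obtain ⟨i, hi⟩ := ht a (by omega) b (by omega) (by rwa [hc])
  exact subset_span ⟨i, by simp [hi, hc]⟩

lemma jac_le_ker {φ : S →ₗ[ℂ] ℂ} (h₁ : ∀ u, φ (u * (4 * X 0 ^ 3 + X 1 ^ 3 + X 2 ^ 3)) = 0)
    (h₂ : ∀ u, φ (u * mono 1 2 0) = 0) (h₃ : ∀ u, φ (u * mono 1 0 2) = 0) :
    jac.restrictScalars ℂ ≤ LinearMap.ker φ := by
  intro p hp
  suffices ∀ u, φ (u * p) = 0 by simpa using this 1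
  induction hp using Submodule.span_induction with
  | mem g hg =>
    rcases hg with rfl | rfl | rfl
    · exact h₁
    · intro u
      rw [show u * (3 * (X 0 * X 1 ^ 2)) = (3 : ℂ) • (u * mono 1 2 0) by
        rw [smul_eq_C_mul, map_ofNat]; simp only [mono]; ring, map_smul, h₂, smul_zero]
    · intro u
      rw [show u * (3 * (X 0 * X 2 ^ 2)) = (3 : ℂ) • (u * mono 1 0 2) by
        rw [smul_eq_C_mul, map_ofNat]; simp only [mono]; ring, map_smul, h₃, smul_zero]
  | zero => simp
  | add p q _ _ hp hq => intro u; rw [mul_add, map_add, hp, hq, add_zero]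
  | smul a p _ hp => intro u; rw [smul_eq_mul, ← mul_assoc]; exact hp _

def coeffL (a b c : ℕ) : S →ₗ[ℂ] ℂ := lcoeff ℂ (exps a b c)

@[simp] lemma coeffL_mono (a b c a' b' c' : ℕ) :
    coeffL a b c (mono a' b' c') = if a' = a ∧ b' = b ∧ c' = c then 1 else 0 := by
  simp [coeffL, mono_eq_monomial, coeff_monomial, exps_eq_iff]

@[simp] lemma coeffL_mul_mono (a b c a' b' c' : ℕ) (u : S) :
    coeffL a b c (u * mono a' b' c') =
      if a' ≤ a ∧ b' ≤ b ∧ c' ≤ c then coeffL (a - a') (b - b') (c - c') u else 0 := by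
  simp [coeffL, mono_eq_monomial, coeff_mul_monomial', exps_le_iff, exps_sub]

lemma cubic_gen_eq_mono : (4 * X 0 ^ 3 + X 1 ^ 3 + X 2 ^ 3 : S) =
    (4 : ℂ) • mono 3 0 0 + mono 0 3 0 + mono 0 0 3 := by
  rw [smul_eq_C_mul, map_ofNat]; simp [mono]

lemma milnorDim_eq_of_span {k r : ℕ} {b : Fin r → S}
    (hb : ∀ i, b i ∈ homogeneousSubmodule (Fin 3) ℂ k)
    (hspan : standardSpan k ≤ span ℂ (Set.range b))
    {L : Fin r → S →ₗ[ℂ] ℂ} (hL : ∀ i, jac.restrictScalars ℂ ≤ LinearMap.ker (L i))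
    (hdet : (Matrix.of fun i j => L i (b j)).det ≠ 0) :
    milnorDim lineCubic k = r := by
  rw [milnorDim, span_pderiv_lineCubic, finrank_quotient_comap_subtype_eq hb
    ((homogeneousSubmodule_le_sup_standardSpan k).trans (sup_le_sup_left hspan _)) hL hdet,
    Fintype.card_fin]

lemma milnorDim_eq_of_table {k r : ℕ} (t : Fin r → ℕ × ℕ × ℕ) (L : Fin r → S →ₗ[ℂ] ℂ)
    (hdeg : ∀ i, (t i).1 + (t i).2.1 + (t i).2.2 = k)
    (hstd : ∀ a ≤ k, ∀ b ≤ k - a, IsStandard a b (k - a - b) → ∃ i, t i = (a, b, k - a - b))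
    (hL : ∀ i, jac.restrictScalars ℂ ≤ LinearMap.ker (L i))
    (hdual : Matrix.of (fun i j => L i (mono (t j).1 (t j).2.1 (t j).2.2)) = 1) :
    milnorDim lineCubic k = r :=
  milnorDim_eq_of_span (fun i => hdeg i ▸ mono_mem_homogeneousSubmodule _ _ _)
    (standardSpan_le_span_mono t hstd) hL (by rw [hdual, Matrix.det_one]; exact one_ne_zero)

/- Each functional reads off a coefficient after the rewriting `x³ ↦ -(y³ + z³)/4` (and, in
degree 5, `y⁵ ↦ -y²z³`, `y³z² ↦ -z⁵`), which is why it vanishes on `jac`. -/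

lemma milnorDim_zero : milnorDim lineCubic 0 = 1 :=
  milnorDim_eq_of_table ![(0, 0, 0)] ![coeffL 0 0 0] (by decide) (by decide)
    (fun i => by
      fin_cases i
      exact jac_le_ker (fun _ => by simp [cubic_gen_eq_mono, mul_add]) (fun _ => by simp)
        (fun _ => by simp))
    (by ext i j; fin_cases i; fin_cases j; simp)

lemma milnorDim_one : milnorDim lineCubic 1 = 3 :=
  milnorDim_eq_of_table ![(1, 0, 0), (0, 1, 0), (0, 0, 1)]
    ![coeffL 1 0 0, coeffL 0 1 0, coeffL 0 0 1] (by decide) (by decide)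
    (fun i => by
      fin_cases i <;>
        exact jac_le_ker (fun _ => by simp [cubic_gen_eq_mono, mul_add]) (fun _ => by simp)
          (fun _ => by simp))
    (by ext i j; fin_cases i <;> fin_cases j <;> simp)

lemma milnorDim_two : milnorDim lineCubic 2 = 6 :=
  milnorDim_eq_of_table ![(2, 0, 0), (1, 1, 0), (1, 0, 1), (0, 2, 0), (0, 1, 1), (0, 0, 2)]
    ![coeffL 2 0 0, coeffL 1 1 0, coeffL 1 0 1, coeffL 0 2 0, coeffL 0 1 1, coeffL 0 0 2]
    (by decide) (by decide)
    (fun i => by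
      fin_cases i <;>
        exact jac_le_ker (fun _ => by simp [cubic_gen_eq_mono, mul_add]) (fun _ => by simp)
          (fun _ => by simp))
    (by ext i j; fin_cases i <;> fin_cases j <;> simp)

lemma milnorDim_three : milnorDim lineCubic 3 = 7 :=
  milnorDim_eq_of_table
    ![(2, 1, 0), (2, 0, 1), (1, 1, 1), (0, 3, 0), (0, 2, 1), (0, 1, 2), (0, 0, 3)]
    ![coeffL 2 1 0, coeffL 2 0 1, coeffL 1 1 1,
      coeffL 0 3 0 - (4 : ℂ)⁻¹ • coeffL 3 0 0, coeffL 0 2 1, coeffL 0 1 2,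
      coeffL 0 0 3 - (4 : ℂ)⁻¹ • coeffL 3 0 0]
    (by decide) (by decide)
    (fun i => by
      fin_cases i <;>
        exact jac_le_ker (fun _ => by simp [cubic_gen_eq_mono, mul_add]) (fun _ => by simp)
          (fun _ => by simp))
    (by ext i j; fin_cases i <;> fin_cases j <;> simp)

lemma milnorDim_four : milnorDim lineCubic 4 = 6 :=
  milnorDim_eq_of_table ![(2, 1, 1), (0, 4, 0), (0, 3, 1), (0, 2, 2), (0, 1, 3), (0, 0, 4)]
    ![coeffL 2 1 1,
      coeffL 0 4 0 - (4 : ℂ)⁻¹ • coeffL 3 1 0, coeffL 0 3 1 - (4 : ℂ)⁻¹ • coeffL 3 0 1,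
      coeffL 0 2 2,
      coeffL 0 1 3 - (4 : ℂ)⁻¹ • coeffL 3 1 0, coeffL 0 0 4 - (4 : ℂ)⁻¹ • coeffL 3 0 1]
    (by decide) (by decide)
    (fun i => by
      fin_cases i <;>
        exact jac_le_ker (fun _ => by simp [cubic_gen_eq_mono, mul_add]) (fun _ => by simp)
          (fun _ => by simp))
    (by ext i j; fin_cases i <;> fin_cases j <;> simp)

lemma milnorDim_five : milnorDim lineCubic 5 = 4 :=
  milnorDim_eq_of_table ![(0, 4, 1), (0, 2, 3), (0, 1, 4), (0, 0, 5)]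
    ![coeffL 0 4 1 - (4 : ℂ)⁻¹ • coeffL 3 1 1, coeffL 0 2 3 - coeffL 0 5 0,
      coeffL 0 1 4 - (4 : ℂ)⁻¹ • coeffL 3 1 1, coeffL 0 0 5 - coeffL 0 3 2]
    (by decide) (by decide)
    (fun i => by
      fin_cases i <;>
        exact jac_le_ker (fun _ => by simp [cubic_gen_eq_mono, mul_add]) (fun _ => by simp)
          (fun _ => by simp))
    (by ext i j; fin_cases i <;> fin_cases j <;> simp)

lemma isPrimitiveRoot_exp_three :
    IsPrimitiveRoot (Complex.exp (2 * Real.pi * Complex.I / 3)) 3 := by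
  simpa using Complex.isPrimitiveRoot_exp 3 (by norm_num)

/-- The singular points of `C` are `(0 : negCubeRoot j : 1)`, where the line `x = 0` meets the
cubic. -/
def negCubeRoot (j : Fin 3) : ℂ := -Complex.exp (2 * Real.pi * Complex.I / 3) ^ (j : ℕ)

lemma negCubeRoot_pow_three (j : Fin 3) : negCubeRoot j ^ 3 = -1 := by
  rw [negCubeRoot, neg_pow, ← pow_mul, mul_comm (j : ℕ), pow_mul,
    isPrimitiveRoot_exp_three.pow_eq_one, one_pow]
  norm_num

lemma negCubeRoot_injective : Function.Injective negCubeRoot := fun i j h =>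
  Fin.ext <| isPrimitiveRoot_exp_three.pow_inj i.isLt j.isLt (neg_inj.1 h)

def evalAt (j : Fin 3) : S →ₗ[ℂ] ℂ := (aeval ![0, negCubeRoot j, 1]).toLinearMap

lemma jac_le_ker_evalAt (j : Fin 3) : jac.restrictScalars ℂ ≤ LinearMap.ker (evalAt j) :=
  jac_le_ker (fun u => by simp [evalAt, negCubeRoot_pow_three]) (fun u => by simp [evalAt, mono])
    (fun u => by simp [evalAt, mono])

lemma milnorDim_of_six_le {k : ℕ} (hk : 6 ≤ k) : milnorDim lineCubic k = 3 := by
  refine milnorDim_eq_of_span (b := fun i : Fin 3 => mono 0 i (k - i))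
    (fun i => by simpa [show (i : ℕ) + (k - i) = k by omega] using
      mono_mem_homogeneousSubmodule 0 i (k - i))
    (standardSpan_le_span_mono (fun i : Fin 3 => (0, (i : ℕ), k - i)) ?_) jac_le_ker_evalAt ?_
  · intro a _ b _ hs
    simp only [IsStandard] at hs
    exact ⟨⟨b, by omega⟩, by simp; omega⟩
  · convert Matrix.det_vandermonde_ne_zero_iff.2 negCubeRoot_injective using 2
    ext j i
    simp [evalAt, mono, Matrix.vandermonde_apply]

lemma milnorDim_lineCubic (k : ℕ) : milnorDim lineCubic k = [1, 3, 6, 7, 6, 4].getD k 3 := by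
  rcases le_or_gt k 5 with hk | hk
  · interval_cases k
    exacts [milnorDim_zero, milnorDim_one, milnorDim_two, milnorDim_three, milnorDim_four,
      milnorDim_five]
  · rw [milnorDim_of_six_le hk, List.getD_eq_default _ _ (by simp; omega)]

lemma smoothMilnorDim_four {k : ℕ} (hk : k ≤ 6) :
    smoothMilnorDim 4 k = [1, 3, 6, 7, 6, 3, 1].getD k 0 := by
  have h : (∑ i ∈ Finset.range (4 - 1), (Polynomial.X : Polynomial ℕ) ^ i) ^ 3 =
      1 + 3 * Polynomial.X + 6 * Polynomial.X ^ 2 + 7 * Polynomial.X ^ 3 +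
        6 * Polynomial.X ^ 4 + 3 * Polynomial.X ^ 5 + Polynomial.X ^ 6 := by
    simp only [Finset.sum_range_succ, Finset.sum_range_zero]
    ring
  rw [smoothMilnorDim, h]
  interval_cases k <;> simp [Polynomial.coeff_X, Polynomial.coeff_one, Polynomial.coeff_X_pow]

end LineCubic

end

theorem stmt8 (f : MvPolynomial (Fin 3) ℂ)
    (hf : f = X 0 * (X 0 ^ 3 + X 1 ^ 3 + X 2 ^ 3)) :
    milnorDim f 0 = 1 ∧ milnorDim f 1 = 3 ∧ milnorDim f 2 = 6 ∧ milnorDim f 3 = 7 ∧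
    milnorDim f 4 = 6 ∧ milnorDim f 5 = 4 ∧ (∀ k, 6 ≤ k → milnorDim f k = 3) ∧
    -- `ct(C) = 4`
    IsGreatest {q : ℕ | ∀ k ≤ q, milnorDim f k = smoothMilnorDim 4 k} 4 ∧
    -- `st(C) = 6` (the total Tjurina number of `C` is `τ(C) = 3`)
    IsLeast {q : ℕ | ∀ k, q ≤ k → milnorDim f k = 3} 6 := by
  subst hf
  have hM := LineCubic.milnorDim_lineCubic
  have hS := @LineCubic.smoothMilnorDim_four
  refine ⟨hM 0, hM 1, hM 2, hM 3, hM 4, hM 5, fun k => LineCubic.milnorDim_of_six_le,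
    ⟨fun k hk => ?_, fun q hq => ?_⟩, ⟨fun k => LineCubic.milnorDim_of_six_le, fun q hq => ?_⟩⟩
  · interval_cases k <;> rw [hM, hS (by omega)] <;> rfl
  · by_contra! hq5
    have h5 := hq 5 hq5
    rw [hM, hS (by omega)] at h5
    exact absurd h5 (by decide)
  · by_contra! hq5
    have h5 := hq 5 (by omega)
    rw [hM] at h5
    exact absurd h5 (by decide)
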